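/- Let f: R^N -> R be convex and L-smooth, g: R^N -> R continuous and convex, and s = 1/L. Define the generalized gradient G_{sF}(u) = (1/s)(u - P_{sg}(u - s ∇f(u))). If v_i = u_i - e_i is an approximation of u_i with error e_i, then ||G_{sF}(v_i)|| ≤ L√2 ||e_i|| + ||G_{sF}(u_i)||. -/

import Mathlib

/-! With `s = 1 / L`, the Baillon–Haddad theorem makes `s ∇f` firmly nonexpansive, and the
proximal map `P` of `s g` is firmly nonexpansive by its variational inequality. For any two
firmly nonexpansive maps `A` and `P` the residual `x ↦ x - P (x - A x)` is `√2`-Lipschitz, since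
it splits into `A x` plus the residual of `P` at `x - A x`, whose squared increments are bounded by
`‖x - y‖² - ‖A x - A y‖²`. As `G = L • (id - P ∘ (id - s ∇f))`, the map `G` is `L√2`-Lipschitz
and the bound follows from the triangle inequality. -/

open Set
open scoped RealInnerProductSpace NNReal

lemma le_of_forall_mem_Ioc_le_add_mul {a b c : ℝ} (h : ∀ t ∈ Ioc (0 : ℝ) 1, a ≤ b + t * c) :
    a ≤ b := by
  have hcont : Continuous fun t : ℝ => b + t * c := by fun_prop
  have hlim : Filter.Tendsto (fun t : ℝ => b + t * c) (nhdsWithin 0 (Ioi 0)) (nhds b) := by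
    simpa using (hcont.tendsto 0).mono_left nhdsWithin_le_nhds
  exact ge_of_tendsto hlim (Filter.mem_of_superset (Ioc_mem_nhdsGT one_pos) h)

def FirmlyNonexpansive {E : Type*} [NormedAddCommGroup E] [InnerProductSpace ℝ E]
    (T : E → E) : Prop :=
  ∀ x y, ‖T x - T y‖ ^ 2 ≤ ⟪T x - T y, x - y⟫

section Gradient

variable {E : Type*} [NormedAddCommGroup E] [InnerProductSpace ℝ E] [CompleteSpace E]
  {f : E → ℝ} {f' : E → E}

lemma HasGradientAt.hasDerivAt_add_smul {g : E} {x d : E} {t : ℝ}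
    (h : HasGradientAt f g (x + t • d)) :
    HasDerivAt (fun t : ℝ => f (x + t • d)) ⟪g, d⟫ t := by
  have hline : HasDerivAt (fun t : ℝ => x + t • d) d t := by
    simpa using ((hasDerivAt_id t).smul_const d).const_add x
  simpa [InnerProductSpace.toDual_apply_apply, Function.comp_def] using
    (hasGradientAt_iff_hasFDerivAt.mp h).comp_hasDerivAt t hline

lemma ConvexOn.add_inner_gradient_le (hconv : ConvexOn ℝ univ f)
    (hgrad : ∀ x, HasGradientAt f (f' x) x) (x y : E) :
    f x + ⟪f' x, y - x⟫ ≤ f y := by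
  have hline : ConvexOn ℝ univ fun t : ℝ => f (x + t • (y - x)) := by
    simpa [Function.comp_def, AffineMap.lineMap_apply, add_comm] using
      hconv.comp_affineMap (AffineMap.lineMap x y : ℝ →ᵃ[ℝ] E)
  have hderiv := (hgrad (x + (0 : ℝ) • (y - x))).hasDerivAt_add_smul
  have := hline.le_slope_of_hasDerivAt (mem_univ 0) (mem_univ 1) one_pos hderiv
  simp only [slope_def_field, zero_smul, add_zero, one_smul, add_sub_cancel, sub_zero,
    div_one] at this
  linarith

lemma LipschitzWith.le_add_inner_gradient_add_sq {K : ℝ≥0} (hlip : LipschitzWith K f')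
    (hgrad : ∀ x, HasGradientAt f (f' x) x) (x y : E) :
    f y ≤ f x + ⟪f' x, y - x⟫ + K / 2 * ‖y - x‖ ^ 2 := by
  set d := y - x
  let ψ : ℝ → ℝ := fun t => f (x + t • d) - t * ⟪f' x, d⟫ - K / 2 * t ^ 2 * ‖d‖ ^ 2
  have hψ : ∀ t, HasDerivAt ψ (⟪f' (x + t • d), d⟫ - ⟪f' x, d⟫ - K * t * ‖d‖ ^ 2) t := by
    intro t
    have hquad := ((hasDerivAt_pow 2 t).const_mul ((K : ℝ) / 2)).mul_const (‖d‖ ^ 2)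
    have hline : HasDerivAt (fun t : ℝ => f (x + t • d)) ⟪f' (x + t • d), d⟫ t :=
      (hgrad _).hasDerivAt_add_smul
    exact ((hline.sub ((hasDerivAt_id t).mul_const ⟪f' x, d⟫)).sub hquad).congr_deriv
      (by simp only [one_mul, Nat.cast_ofNat, Nat.add_one_sub_one, pow_one]; ring)
  have hψ_nonpos : ∀ t ∈ interior (Icc (0 : ℝ) 1),
      ⟪f' (x + t • d), d⟫ - ⟪f' x, d⟫ - K * t * ‖d‖ ^ 2 ≤ 0 := by
    intro t ht
    rw [interior_Icc] at ht
    have : ⟪f' (x + t • d) - f' x, d⟫ ≤ K * t * ‖d‖ ^ 2 :=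
      calc ⟪f' (x + t • d) - f' x, d⟫ ≤ ‖f' (x + t • d) - f' x‖ * ‖d‖ := real_inner_le_norm _ _
        _ ≤ K * ‖(x + t • d) - x‖ * ‖d‖ := by gcongr; exact hlip.norm_sub_le _ _
        _ = K * t * ‖d‖ ^ 2 := by
          rw [add_sub_cancel_left, norm_smul, Real.norm_of_nonneg ht.1.le]; ring
    rw [inner_sub_left] at this
    linarith
  have hanti : AntitoneOn ψ (Icc 0 1) :=
    antitoneOn_of_hasDerivWithinAt_nonpos (convex_Icc 0 1)
      (continuous_iff_continuousAt.2 fun t => (hψ t).continuousAt).continuousOn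
      (fun t _ => (hψ t).hasDerivWithinAt) hψ_nonpos
  have := hanti (left_mem_Icc.2 zero_le_one) (right_mem_Icc.2 zero_le_one) zero_le_one
  simp only [ψ, d, zero_smul, add_zero, one_smul, add_sub_cancel] at this
  linarith

lemma ConvexOn.add_inner_gradient_add_sq_le {K : ℝ≥0} (hconv : ConvexOn ℝ univ f)
    (hgrad : ∀ x, HasGradientAt f (f' x) x) (hlip : LipschitzWith K f') (x y : E) :
    f x + ⟪f' x, y - x⟫ + (2 * (K : ℝ))⁻¹ * ‖f' y - f' x‖ ^ 2 ≤ f y := by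
  set Δ := f' y - f' x
  -- compare `f` at `x` and `y` through the gradient step `z` from `y`
  set z := y - (K : ℝ)⁻¹ • Δ with hz
  have hzy_eq : z - y = -((K : ℝ)⁻¹ • Δ) := by rw [hz]; abel
  have hx := hconv.add_inner_gradient_le hgrad x z
  have hy := hlip.le_add_inner_gradient_add_sq hgrad y z
  have hzx : ⟪f' x, z - x⟫ = ⟪f' x, y - x⟫ - (K : ℝ)⁻¹ * ⟪f' x, Δ⟫ := by
    rw [show z - x = (y - x) - (K : ℝ)⁻¹ • Δ by rw [hz]; abel, inner_sub_right,
      real_inner_smul_right]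
  have hzy : ⟪f' y, z - y⟫ = -(K : ℝ)⁻¹ * ⟪f' y, Δ⟫ := by
    rw [hzy_eq, inner_neg_right, real_inner_smul_right, neg_mul]
  have hzy_sq : ‖z - y‖ ^ 2 = (K : ℝ)⁻¹ ^ 2 * ‖Δ‖ ^ 2 := by
    rw [hzy_eq, norm_neg, norm_smul, mul_pow, Real.norm_of_nonneg (by positivity)]
  have hΔ : ⟪f' y, Δ⟫ - ⟪f' x, Δ⟫ = ‖Δ‖ ^ 2 := by
    rw [← inner_sub_left, real_inner_self_eq_norm_sq]
  have hcoef : (K : ℝ)⁻¹ - K / 2 * (K : ℝ)⁻¹ ^ 2 = (2 * (K : ℝ))⁻¹ := by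
    rcases eq_or_ne (K : ℝ) 0 with hK | hK
    · simp [hK]
    · field_simp; ring
  rw [hzx] at hx
  rw [hzy, hzy_sq] at hy
  linarith [congrArg (· * ‖Δ‖ ^ 2) hcoef, congrArg ((K : ℝ)⁻¹ * ·) hΔ]

/-- Baillon–Haddad: the gradient of a convex function is `K⁻¹`-cocoercive. -/
lemma ConvexOn.firmlyNonexpansive_inv_smul_gradient {K : ℝ≥0} (hconv : ConvexOn ℝ univ f)
    (hgrad : ∀ x, HasGradientAt f (f' x) x) (hlip : LipschitzWith K f') :
    FirmlyNonexpansive fun x => (K : ℝ)⁻¹ • f' x := by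
  intro x y
  have hxy := hconv.add_inner_gradient_add_sq_le hgrad hlip x y
  have hyx := hconv.add_inner_gradient_add_sq_le hgrad hlip y x
  have hcocoercive : (K : ℝ)⁻¹ * ‖f' x - f' y‖ ^ 2 ≤ ⟪f' x - f' y, x - y⟫ := by
    have hinner : ⟪f' x, y - x⟫ + ⟪f' y, x - y⟫ = -⟪f' x - f' y, x - y⟫ := by
      rw [← neg_sub x y, inner_neg_right, inner_sub_left]; ring
    have hcoef : (K : ℝ)⁻¹ = 2 * (2 * (K : ℝ))⁻¹ := by
      rw [mul_inv, ← mul_assoc, mul_inv_cancel₀ two_ne_zero, one_mul]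
    rw [norm_sub_rev] at hxy
    linarith [congrArg (· * ‖f' x - f' y‖ ^ 2) hcoef]
  simp only [← smul_sub, norm_smul, mul_pow, real_inner_smul_left,
    Real.norm_of_nonneg (inv_nonneg.2 K.coe_nonneg)]
  rw [sq, mul_assoc]
  exact mul_le_mul_of_nonneg_left hcocoercive (by positivity)

end Gradient

section Proximal

variable {E : Type*} [NormedAddCommGroup E] [InnerProductSpace ℝ E]

lemma ConvexOn.inner_sub_le_of_isMinOn_add_sq {g : E → ℝ} (hg : ConvexOn ℝ univ g) {v p : E}
    (hp : IsMinOn (fun z => g z + ‖z - v‖ ^ 2 / 2) univ p) (q : E) :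
    ⟪v - p, q - p⟫ ≤ g q - g p := by
  -- compare `p` with the points `p + t • (q - p)` and let `t → 0⁺`
  refine le_of_forall_mem_Ioc_le_add_mul (c := ‖q - p‖ ^ 2 / 2) fun t ht => ?_
  have hmin : g p + ‖p - v‖ ^ 2 / 2 ≤ g (p + t • (q - p)) + ‖p + t • (q - p) - v‖ ^ 2 / 2 :=
    hp (mem_univ _)
  have hconv : g (p + t • (q - p)) ≤ (1 - t) * g p + t * g q := by
    rw [show p + t • (q - p) = (1 - t) • p + t • q by module]
    exact hg.2 (mem_univ p) (mem_univ q) (sub_nonneg.2 ht.2) ht.1.le (sub_add_cancel 1 t)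
  have hnorm : ‖p + t • (q - p) - v‖ ^ 2
      = ‖p - v‖ ^ 2 + 2 * t * ⟪p - v, q - p⟫ + t ^ 2 * ‖q - p‖ ^ 2 := by
    rw [add_sub_right_comm, norm_add_sq_real, real_inner_smul_right, norm_smul, mul_pow,
      Real.norm_eq_abs, sq_abs]
    ring
  have hinner : ⟪v - p, q - p⟫ = -⟪p - v, q - p⟫ := by rw [← inner_neg_left, neg_sub]
  have : t * (⟪v - p, q - p⟫ - (g q - g p + t * (‖q - p‖ ^ 2 / 2))) ≤ 0 := by
    rw [hinner]; nlinarith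
  linarith [nonpos_of_mul_nonpos_right this ht.1]

lemma ConvexOn.firmlyNonexpansive_of_isMinOn {g : E → ℝ} (hg : ConvexOn ℝ univ g) {P : E → E}
    (hP : ∀ v, IsMinOn (fun z => g z + ‖z - v‖ ^ 2 / 2) univ (P v)) : FirmlyNonexpansive P := by
  intro a b
  have ha := hg.inner_sub_le_of_isMinOn_add_sq (hP a) (P b)
  have hb := hg.inner_sub_le_of_isMinOn_add_sq (hP b) (P a)
  have hsum : ⟪a - P a, P b - P a⟫ + ⟪b - P b, P a - P b⟫
      = ‖P a - P b‖ ^ 2 - ⟪P a - P b, a - b⟫ := by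
    rw [← neg_sub (P a) (P b), inner_neg_right, ← real_inner_self_eq_norm_sq,
      real_inner_comm (a - b) (P a - P b), neg_add_eq_sub, ← inner_sub_left, ← inner_sub_left]
    congr 1
    abel
  linarith

end Proximal

section FirmlyNonexpansive

variable {E : Type*} [NormedAddCommGroup E] [InnerProductSpace ℝ E] {T A P : E → E}

lemma FirmlyNonexpansive.norm_sub_sub_sq_le (hT : FirmlyNonexpansive T) (x y : E) :
    ‖(x - y) - (T x - T y)‖ ^ 2 ≤ ‖x - y‖ ^ 2 - ‖T x - T y‖ ^ 2 := by
  rw [norm_sub_sq_real, real_inner_comm]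
  linarith [hT x y]

lemma FirmlyNonexpansive.norm_sub_apply_sub_sub_le (hA : FirmlyNonexpansive A)
    (hP : FirmlyNonexpansive P) (x y : E) :
    ‖(x - P (x - A x)) - (y - P (y - A y))‖ ≤ √2 * ‖x - y‖ := by
  set a := x - A x with ha
  set b := y - A y with hb
  have hsplit : (x - P a) - (y - P b) = (A x - A y) + ((a - b) - (P a - P b)) := by
    rw [ha, hb]; abel
  have hab : ‖a - b‖ ^ 2 ≤ ‖x - y‖ ^ 2 - ‖A x - A y‖ ^ 2 := by
    rw [show a - b = (x - y) - (A x - A y) by rw [ha, hb]; abel]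
    exact hA.norm_sub_sub_sq_le x y
  have hPab : ‖(a - b) - (P a - P b)‖ ^ 2 ≤ ‖a - b‖ ^ 2 := by
    linarith [hP.norm_sub_sub_sq_le a b, sq_nonneg ‖P a - P b‖]
  have hsq : ‖(x - P a) - (y - P b)‖ ^ 2 ≤ (√2 * ‖x - y‖) ^ 2 := by
    rw [hsplit, mul_pow, Real.sq_sqrt zero_le_two]
    have := parallelogram_law_with_norm ℝ (A x - A y) ((a - b) - (P a - P b))
    nlinarith [sq_nonneg ‖(A x - A y) - ((a - b) - (P a - P b))‖]
  exact (pow_le_pow_iff_left₀ (norm_nonneg _) (by positivity) two_ne_zero).1 hsq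

end FirmlyNonexpansive

theorem generalized_gradient_error_bound_general (N : ℕ) (L s : ℝ) (hL : 0 < L) (hs : s = 1 / L)
    (f : EuclideanSpace ℝ (Fin N) → ℝ)
    (f' : EuclideanSpace ℝ (Fin N) → EuclideanSpace ℝ (Fin N))
    (hfconv : ConvexOn ℝ Set.univ f)
    (hgrad : ∀ x, HasGradientAt f (f' x) x)
    (hlip : LipschitzWith (Real.toNNReal L) f')
    (g : EuclideanSpace ℝ (Fin N) → ℝ)
    (hgconv : ConvexOn ℝ Set.univ g)
    (P : EuclideanSpace ℝ (Fin N) → EuclideanSpace ℝ (Fin N))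
    (hP : ∀ v, IsMinOn (fun z => s * g z + ‖z - v‖ ^ 2 / 2) Set.univ (P v))
    (G : EuclideanSpace ℝ (Fin N) → EuclideanSpace ℝ (Fin N))
    (hG : ∀ x, G x = (1 / s) • (x - P (x - s • f' x)))
    (u e : EuclideanSpace ℝ (Fin N)) :
    ‖G (u - e)‖ ≤ L * Real.sqrt 2 * ‖e‖ + ‖G u‖ := by
  have hs0 : 0 < s := by rw [hs]; positivity
  have hgrad_step : FirmlyNonexpansive fun x => s • f' x := by
    have hK : (Real.toNNReal L : ℝ)⁻¹ = s := by rw [Real.coe_toNNReal _ hL.le, hs, one_div]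
    simpa only [hK] using hfconv.firmlyNonexpansive_inv_smul_gradient hgrad hlip
  have hprox : FirmlyNonexpansive P := (hgconv.smul hs0.le).firmlyNonexpansive_of_isMinOn hP
  have hresidual : ‖G (u - e) - G u‖ ≤ L * √2 * ‖e‖ := by
    have hinv : 1 / s = L := by rw [hs, one_div_one_div]
    rw [hG, hG, ← smul_sub, norm_smul, hinv, Real.norm_of_nonneg hL.le, mul_assoc]
    gcongr
    simpa using hgrad_step.norm_sub_apply_sub_sub_le hprox (u - e) u
  linarith [norm_le_norm_add_norm_sub' (G (u - e)) (G u)]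

/-- gradient bound for an approximation `v_i = u_i - e_i`:
`‖G_{sF}(v_i)‖ ≤ L√2 ‖e_i‖ + ‖G_{sF}(u_i)‖`, where
`G_{sF}(u) = (1/s)(u - P_{sg}(u - s ∇f(u)))`, `s = 1/L`. -/
theorem generalized_gradient_error_bound (N : ℕ) (L s : ℝ) (hL : 0 < L) (hs : s = 1 / L)
    (f : EuclideanSpace ℝ (Fin N) → ℝ)
    (f' : EuclideanSpace ℝ (Fin N) → EuclideanSpace ℝ (Fin N))
    (hfconv : ConvexOn ℝ Set.univ f)
    (hgrad : ∀ x, HasGradientAt f (f' x) x)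
    (hlip : LipschitzWith (Real.toNNReal L) f')
    (g : EuclideanSpace ℝ (Fin N) → ℝ)
    (hgconv : ConvexOn ℝ Set.univ g) (hgcont : Continuous g)
    (P : EuclideanSpace ℝ (Fin N) → EuclideanSpace ℝ (Fin N))
    (hP : ∀ v, IsMinOn (fun z => s * g z + ‖z - v‖ ^ 2 / 2) Set.univ (P v))
    (G : EuclideanSpace ℝ (Fin N) → EuclideanSpace ℝ (Fin N))
    (hG : ∀ x, G x = (1 / s) • (x - P (x - s • f' x)))
    (u e : EuclideanSpace ℝ (Fin N)) :
    ‖G (u - e)‖ ≤ L * Real.sqrt 2 * ‖e‖ + ‖G u‖ :=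
  generalized_gradient_error_bound_general N L s hL hs f f' hfconv hgrad hlip g hgconv P hP G hG u e
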